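/- Let α < 0 be a real number with f(α) ≥ 0 (equivalently, α ≤ x0 where x0 ≈ −3.09997 is the root of f). Then for every length vector L with square count n(L) = n ≥ 3, one has Ψ_α(L) ≥ f(α)·(n−1) + 2·g(α) + (n−3)·h(α), with equality if and only if L = (2,2,…,2) with n−1 entries. (This is Proposition 2: among polyomino chains in Ω_n, the zigzag chain Z_n uniquely minimizes χ_α for α ≤ x0.) -/

import Mathlib

noncomputable def f (α : ℝ) : ℝ := 2 * (5:ℝ) ^ α - 6 * (6:ℝ) ^ α + 4 * (7:ℝ) ^ α
noncomputable def g (α : ℝ) : ℝ := 2 * (6:ℝ) ^ α - (5:ℝ) ^ α - (7:ℝ) ^ α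
noncomputable def h (α : ℝ) : ℝ := 5 * (6:ℝ) ^ α - 2 * (5:ℝ) ^ α - 4 * (7:ℝ) ^ α + (8:ℝ) ^ α

/-- A length vector: a nonempty list of segment lengths, each at least 2. -/
def LengthVector (L : List ℕ) : Prop := L ≠ [] ∧ ∀ l ∈ L, 2 ≤ l

/-- Square count of a length vector: `l₁ + ⋯ + l_s − (s − 1)`. -/
def nSq (L : List ℕ) : ℕ := L.sum - (L.length - 1)

/-- Number of external (first or last) entries equal to 2. -/
def e2 (L : List ℕ) : ℕ :=
  ((Finset.range L.length).filter
    (fun j => (j = 0 ∨ j = L.length - 1) ∧ L.getD j 0 = 2)).card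

/-- Number of internal entries (neither first nor last) equal to 2. -/
def i2 (L : List ℕ) : ℕ :=
  ((Finset.range L.length).filter
    (fun j => j ≠ 0 ∧ j ≠ L.length - 1 ∧ L.getD j 0 = 2)).card

/-- The weight Ψ_α(L) = f(α)·s + g(α)·e₂(L) + h(α)·i₂(L). -/
noncomputable def psi (α : ℝ) (L : List ℕ) : ℝ :=
  f α * L.length + g α * e2 L + h α * i2 L

/-!
Writing `s` for the number of segments, `f + h = 8^α - 6^α` gives
`Ψ_α(L) - Ψ_α(Z_n) = (6^α - 8^α)(n - 1 - s) - g(α)(2 - e₂) - h(α)(s - 2 - i₂)`.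
For `α < 0` we have `8^α < 6^α`, `g(α) < 0` by AM-GM (`5^α + 7^α ≥ 2·35^(α/2) > 2·36^(α/2)`),
and `h(α) = (8^α - 6^α) - f(α) < 0` once `f(α) ≥ 0`. Since every segment has length at least 2,
`s ≤ n - 1` with equality only for `L = (2,…,2)`, so all three terms are nonnegative and the first
is positive unless `L` is the zigzag vector. A single segment, where `s - 2 - i₂ < 0`, is checked
directly: `Ψ_α((n)) = f(α) > Ψ_α(Z_n)` because `f + 2g = 2(7^α - 6^α) < 0`.
-/

open List

section LengthVectors

variable {L : List ℕ}

lemma getD_replicate_eq_iff {a d m j : ℕ} (had : a ≠ d) :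
    (replicate m a).getD j d = a ↔ j < m := by
  by_cases hj : j < m <;> simp [getD_eq_getElem?_getD, hj, had.symm]

lemma e2_le_two (L : List ℕ) : e2 L ≤ 2 :=
  calc e2 L ≤ ({0, L.length - 1} : Finset ℕ).card :=
        Finset.card_le_card fun j hj => by simp_all
    _ ≤ 2 := Finset.card_le_two

lemma i2_le_length_sub_two (L : List ℕ) : i2 L ≤ L.length - 2 :=
  calc i2 L ≤ (Finset.Ioo 0 (L.length - 1)).card :=
        Finset.card_le_card fun j hj => by
          simp only [Finset.mem_filter, Finset.mem_range, Finset.mem_Ioo] at hj ⊢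
          omega
    _ = L.length - 2 := by simp only [Nat.card_Ioo]; omega

lemma e2_replicate_two {m : ℕ} (hm : 2 ≤ m) : e2 (replicate m 2) = 2 := by
  have : (Finset.range m).filter (fun j => (j = 0 ∨ j = m - 1) ∧ (replicate m 2).getD j 0 = 2)
      = {0, m - 1} := by
    ext j
    simp only [Finset.mem_filter, Finset.mem_range, Finset.mem_insert, Finset.mem_singleton,
      getD_replicate_eq_iff two_ne_zero]
    omega
  rw [e2, length_replicate, this, Finset.card_pair (by omega)]

lemma i2_replicate_two (m : ℕ) : i2 (replicate m 2) = m - 2 := by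
  have : (Finset.range m).filter (fun j => j ≠ 0 ∧ j ≠ m - 1 ∧ (replicate m 2).getD j 0 = 2)
      = Finset.Ioo 0 (m - 1) := by
    ext j
    simp only [Finset.mem_filter, Finset.mem_range, Finset.mem_Ioo,
      getD_replicate_eq_iff two_ne_zero]
    omega
  rw [i2, length_replicate, this, Nat.card_Ioo]
  omega

lemma eq_replicate_two_of_sum_eq (h2 : ∀ l ∈ L, 2 ≤ l) (hsum : L.sum = 2 * L.length) :
    L = replicate L.length 2 := by
  induction L with
  | nil => rfl
  | cons a t ih =>
    have ht : 2 * t.length ≤ t.sum := by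
      simpa [mul_comm] using card_nsmul_le_sum t 2 fun l hl => h2 l (mem_cons_of_mem a hl)
    have ha := h2 a mem_cons_self
    simp only [length_cons, sum_cons] at hsum ⊢
    obtain rfl : a = 2 := by omega
    rw [replicate_succ, ← ih (fun l hl => h2 l (mem_cons_of_mem _ hl)) (by omega)]

lemma LengthVector.length_add_one_lt_nSq (hL : LengthVector L)
    (hne : L ≠ replicate (nSq L - 1) 2) : L.length + 1 < nSq L := by
  have hlen : 0 < L.length := length_pos_iff.mpr hL.1
  have hsum : 2 * L.length ≤ L.sum := by
    simpa [mul_comm] using card_nsmul_le_sum L 2 hL.2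
  by_contra! hle
  have htwos : L.sum = 2 * L.length := by unfold nSq at hle; omega
  refine hne ((eq_replicate_two_of_sum_eq hL.2 htwos).trans ?_)
  congr 1
  unfold nSq
  omega

lemma psi_singleton (α : ℝ) {a : ℕ} (ha : a ≠ 2) : psi α [a] = f α := by
  simp [psi, e2, i2, Finset.filter_singleton, ha]

end LengthVectors

section Weights

variable {α : ℝ}

lemma g_neg (hα : α < 0) : g α < 0 := by
  have hsq {b : ℝ} (hb : 0 < b) : b ^ α = (b ^ (α / 2)) ^ 2 := by
    rw [sq, ← Real.rpow_add hb, add_halves]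
  have hgm : ((6 : ℝ) ^ (α / 2)) ^ 2 < 5 ^ (α / 2) * 7 ^ (α / 2) :=
    calc ((6 : ℝ) ^ (α / 2)) ^ 2 = 36 ^ (α / 2) := by
          rw [sq, ← Real.mul_rpow (by norm_num) (by norm_num)]
          norm_num
      _ < 35 ^ (α / 2) := Real.rpow_lt_rpow_of_neg (by norm_num) (by norm_num) (by linarith)
      _ = 5 ^ (α / 2) * 7 ^ (α / 2) := by
          rw [← Real.mul_rpow (by norm_num) (by norm_num)]
          norm_num
  rw [g, hsq (b := 5) (by norm_num), hsq (b := 6) (by norm_num), hsq (b := 7) (by norm_num)]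
  nlinarith [sq_nonneg ((5 : ℝ) ^ (α / 2) - 7 ^ (α / 2))]

lemma f_add_h (α : ℝ) : f α + h α = 8 ^ α - 6 ^ α := by
  rw [f, h]
  ring

lemma f_add_h_neg (hα : α < 0) : f α + h α < 0 := by
  rw [f_add_h, sub_neg]
  exact Real.rpow_lt_rpow_of_neg (by norm_num) (by norm_num) hα

lemma h_neg (hα : α < 0) (hf : 0 ≤ f α) : h α < 0 := by
  linarith [f_add_h_neg hα]

lemma f_add_two_mul_g_neg (hα : α < 0) : f α + 2 * g α < 0 := by
  have h76 : (7 : ℝ) ^ α < 6 ^ α := Real.rpow_lt_rpow_of_neg (by norm_num) (by norm_num) hα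
  rw [f, g]
  linarith

end Weights

noncomputable def zigzagPsi (α : ℝ) (n : ℕ) : ℝ :=
  f α * ((n : ℝ) - 1) + 2 * g α + ((n : ℝ) - 3) * h α

lemma psi_replicate_two (α : ℝ) {n : ℕ} (hn : 3 ≤ n) :
    psi α (replicate (n - 1) 2) = zigzagPsi α n := by
  rw [psi, zigzagPsi, e2_replicate_two (by omega), i2_replicate_two, length_replicate,
    Nat.cast_sub (by omega), Nat.cast_sub (by omega), Nat.cast_sub (by omega)]
  push_cast
  ring

lemma psi_sub_zigzagPsi (α : ℝ) (L : List ℕ) (n : ℕ) :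
    psi α L - zigzagPsi α n = -(f α + h α) * ((n : ℝ) - 1 - L.length)
      - g α * (2 - e2 L) - h α * ((L.length : ℝ) - 2 - i2 L) := by
  rw [psi, zigzagPsi]
  ring

section Comparison

variable {α : ℝ} {L : List ℕ}

lemma zigzagPsi_lt_psi_of_two_le_length (hα : α < 0) (hf : 0 ≤ f α) {n : ℕ}
    (hs : 2 ≤ L.length) (hn : L.length + 1 < n) : zigzagPsi α n < psi α L := by
  have hsR : ((L.length : ℝ) + 1) < n := by exact_mod_cast hn
  have he : (e2 L : ℝ) ≤ 2 := by exact_mod_cast e2_le_two L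
  have hi : (i2 L : ℝ) ≤ L.length - 2 := by
    rw [← Nat.cast_ofNat, ← Nat.cast_sub hs]
    exact_mod_cast i2_le_length_sub_two L
  have hlen : 0 < -(f α + h α) * ((n : ℝ) - 1 - L.length) :=
    mul_pos (neg_pos.mpr (f_add_h_neg hα)) (by linarith)
  have hext : 0 ≤ -g α * (2 - e2 L) := mul_nonneg (neg_nonneg.mpr (g_neg hα).le) (by linarith)
  have hinner : 0 ≤ -h α * ((L.length : ℝ) - 2 - i2 L) :=
    mul_nonneg (neg_nonneg.mpr (h_neg hα hf).le) (by linarith)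
  rw [← sub_pos, psi_sub_zigzagPsi]
  linarith

lemma zigzagPsi_lt_f (hα : α < 0) {n : ℕ} (hn : 3 ≤ n) : zigzagPsi α n < f α := by
  have hn' : (3 : ℝ) ≤ n := by exact_mod_cast hn
  have hfh := f_add_h_neg hα
  have hfg := f_add_two_mul_g_neg hα
  have : zigzagPsi α n - f α = (f α + h α) * ((n : ℝ) - 3) + (f α + 2 * g α) := by
    rw [zigzagPsi]; ring
  nlinarith

lemma zigzagPsi_lt_psi (hα : α < 0) (hf : 0 ≤ f α) (hL : LengthVector L)
    (hne : L ≠ replicate (nSq L - 1) 2) : zigzagPsi α (nSq L) < psi α L := by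
  have hlt := hL.length_add_one_lt_nSq hne
  rcases le_or_gt 2 L.length with hs | hs
  · exact zigzagPsi_lt_psi_of_two_le_length hα hf hs hlt
  · obtain ⟨a, rfl⟩ : ∃ a, L = [a] :=
      length_eq_one_iff.mp (by have := length_pos_iff.mpr hL.1; omega)
    have ha : nSq [a] = a := by simp [nSq]
    rw [ha] at hlt ⊢
    simp only [length_singleton, Nat.reduceAdd] at hlt
    rw [psi_singleton α (by omega)]
    exact zigzagPsi_lt_f hα hlt

end Comparison

/-- Proposition 2: if α < 0 and f(α) ≥ 0, then every length vector with square
count n ≥ 3 satisfies Ψ_α(L) ≥ f(α)(n−1) + 2g(α) + (n−3)h(α), with equality iff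
L = (2,…,2) with n−1 entries (the zigzag chain). -/
theorem psi_ge_zigzag_of_f_nonneg (α : ℝ) (hα : α < 0) (hf : 0 ≤ f α)
    (L : List ℕ) (hL : LengthVector L) (n : ℕ) (hn : nSq L = n) (hn3 : 3 ≤ n) :
    f α * ((n : ℝ) - 1) + 2 * g α + ((n : ℝ) - 3) * h α ≤ psi α L ∧
      (psi α L = f α * ((n : ℝ) - 1) + 2 * g α + ((n : ℝ) - 3) * h α ↔
        L = List.replicate (n - 1) 2) := by
  subst hn
  show zigzagPsi α (nSq L) ≤ psi α L ∧
    (psi α L = zigzagPsi α (nSq L) ↔ L = replicate (nSq L - 1) 2)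
  by_cases hzig : L = replicate (nSq L - 1) 2
  · have heq := psi_replicate_two α hn3
    rw [← hzig] at heq
    exact ⟨heq.ge, iff_of_true heq hzig⟩
  · have hlt := zigzagPsi_lt_psi hα hf hL hzig
    exact ⟨hlt.le, iff_of_false hlt.ne' hzig⟩
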